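/- arXiv:2012.04466 — 3 statements merged into one kernel-verified Lean document; each statement's English description precedes it below -/
import Mathlib

section
/- For every n ∈ ℕ there exist a real constant p₀ and real polynomials p₁ and p₂, with deg p₁ ≤ n and deg p₂ ≤ 2n and p₀ = −(p₁(0) + p₂(0)), such that the function y(t) = 1 − exp[−(p₀ + p₁(t)·e^{−t²} + p₂(t)·e^{−2t²})] satisfies y(0) = 0 and y'(t) + g_n(t)·y(t) = g_n(t) for all t, where g_n(t) = (4/√π)·e^{−t²}·f_n(t). -/
open Real intervalIntegral Polynomial

/-- The error function. -/
noncomputable def erf (x : ℝ) : ℝ :=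
  (2 / Real.sqrt π) * ∫ t in (0:ℝ)..x, Real.exp (-t ^ 2)

/-- The Hermite-type polynomials `p k x`. -/
noncomputable def p : ℕ → ℝ → ℝ
  | 0 => fun _ => 1
  | (k + 1) => fun x => deriv (p k) x - 2 * x * p k x

/-- Spline coefficients `c_{n,k}`. -/
noncomputable def c (n k : ℕ) : ℝ :=
  ((Nat.factorial n : ℝ) / ((Nat.factorial (n - k) : ℝ) * (Nat.factorial (k + 1) : ℝ))) *
    ((Nat.factorial (2 * n + 1 - k) : ℝ) / (2 * (Nat.factorial (2 * n + 1) : ℝ)))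

/-- The n-th order spline based approximation to the error function. -/
noncomputable def f (n : ℕ) (x : ℝ) : ℝ :=
  (2 / Real.sqrt π) * ∑ k ∈ Finset.range (n + 1),
    c n k * x ^ (k + 1) * (p k 0 + (-1 : ℝ) ^ k * p k x * Real.exp (-x ^ 2))

/-! With `F = p₀ + p₁ e^{-t²} + p₂ e^{-2t²}`, the function `y = 1 - e^{-F}` satisfies
`y' = g (1 - y)` as soon as `F' = g`. Expanding `fₙ` shows `gₙ = A e^{-t²} + B e^{-2t²}` for odd
polynomials `A`, `B` of degrees `≤ n + 1` and `≤ 2n + 1`, so it suffices to solve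
`p₁' - 2t p₁ = A` and `p₂' - 4t p₂ = B`. For `a ≠ 0` the operator `r ↦ r' - a t r` sends `t^{2j}` to
`2j t^{2j-1} - a t^{2j+1}`, so by induction on `j` every odd monomial `t^{2j+1}` is the image of a
polynomial of degree `≤ 2j`; by linearity every odd polynomial is attained with one degree less. -/

namespace Polynomial

variable {K : Type*} [Field K]

-- `twistedDerivative a r = e^{a x²/2} (e^{-a x²/2} r)'`
noncomputable def twistedDerivative (a : K) : K[X] →ₗ[K] K[X] :=
  derivative - LinearMap.mulLeft K (C a * X)

lemma twistedDerivative_apply (a : K) (r : K[X]) :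
    twistedDerivative a r = derivative r - C a * X * r := rfl

def oddPolynomials (R : Type*) [Semiring R] : Submodule R R[X] where
  carrier := {q | ∀ i, Even i → q.coeff i = 0}
  add_mem' hp hq i hi := by rw [coeff_add, hp i hi, hq i hi, add_zero]
  zero_mem' i _ := coeff_zero i
  smul_mem' c q hq i hi := by rw [coeff_smul, hq i hi, smul_zero]

lemma X_pow_mem_oddPolynomials {R : Type*} [Semiring R] {i : ℕ} (hi : Odd i) :
    (X ^ i : R[X]) ∈ oddPolynomials R := fun j hj => by
  rw [coeff_X_pow, if_neg]
  rintro rfl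
  exact Nat.not_even_iff_odd.2 hi hj

lemma X_pow_odd_mem_map_twistedDerivative {a : K} (ha : a ≠ 0) (j : ℕ) :
    X ^ (2 * j + 1) ∈ (degreeLE K (2 * j : ℕ)).map (twistedDerivative a) := by
  have hinv : C a⁻¹ * C a = 1 := by rw [← C_mul, inv_mul_cancel₀ ha, C_1]
  induction j with
  | zero =>
    refine ⟨-C a⁻¹, mem_degreeLE.2 ((degree_neg _).trans_le degree_C_le), ?_⟩
    simp only [twistedDerivative_apply, derivative_neg, derivative_C]
    linear_combination X * hinv
  | succ j ih =>
    obtain ⟨r, hr, hLr⟩ := ih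
    refine ⟨-a⁻¹ • X ^ (2 * j + 2) + ((2 * j + 2 : K) * a⁻¹) • r, ?_, ?_⟩
    · refine Submodule.add_mem _ (Submodule.smul_mem _ _ ?_) (Submodule.smul_mem _ _ ?_)
      · exact mem_degreeLE.2 (degree_X_pow_le _)
      · exact degreeLE_mono (by norm_cast; omega) hr
    · rw [map_add, map_smul, map_smul, hLr, twistedDerivative_apply, derivative_X_pow]
      simp only [smul_eq_C_mul, map_neg, map_mul, map_add, map_ofNat, map_natCast]
      push_cast
      linear_combination X ^ (2 * j + 3) * hinv

theorem oddPolynomials_inf_degreeLE_le_map_twistedDerivative {a : K} (ha : a ≠ 0) (d : ℕ) :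
    oddPolynomials K ⊓ degreeLE K (d + 1 : ℕ) ≤ (degreeLE K d).map (twistedDerivative a) := by
  rintro q ⟨hodd, hdeg⟩
  have hq : q.natDegree < d + 2 :=
    Nat.lt_succ_of_le (natDegree_le_iff_degree_le.2 (mem_degreeLE.1 hdeg))
  rw [as_sum_range' q (d + 2) hq]
  refine Submodule.sum_mem _ fun i hi => ?_
  rcases Nat.even_or_odd i with he | ⟨j, rfl⟩
  · rw [hodd i he, monomial_zero_right]
    exact Submodule.zero_mem _
  · rw [← C_mul_X_pow_eq_monomial, ← smul_eq_C_mul]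
    refine Submodule.smul_mem _ _ (Submodule.map_mono (degreeLE_mono ?_)
      (X_pow_odd_mem_map_twistedDerivative ha j))
    have hid := Finset.mem_range.1 hi
    norm_cast
    omega

end Polynomial

noncomputable def pPoly : ℕ → ℝ[X]
  | 0 => 1
  | (k + 1) => derivative (pPoly k) - C 2 * X * pPoly k

lemma eval_pPoly (k : ℕ) : (fun x => (pPoly k).eval x) = p k := by
  induction k with
  | zero => exact funext fun _ => by simp [pPoly, p]
  | succ k ih =>
    ext x
    simp only [pPoly, p, ← ih, Polynomial.deriv, eval_sub, eval_mul, eval_C, eval_X]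

lemma coeff_pPoly_eq_zero {k i : ℕ} (h : Odd (i + k)) : (pPoly k).coeff i = 0 := by
  induction k generalizing i with
  | zero =>
    rw [pPoly, coeff_one, if_neg]
    rintro rfl
    simp at h
  | succ k ih =>
    rw [pPoly, coeff_sub, coeff_derivative, mul_assoc, coeff_C_mul, ih (by grind)]
    cases i with
    | zero => simp
    | succ i => rw [coeff_X_mul, ih (by grind)]; simp

lemma natDegree_pPoly_le (k : ℕ) : (pPoly k).natDegree ≤ k := by
  induction k with
  | zero => simp [pPoly]
  | succ k ih =>
    rw [pPoly, mul_assoc]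
    refine (natDegree_sub_le _ _).trans (max_le ?_ ?_)
    · exact (natDegree_derivative_le _).trans (by omega)
    · refine (natDegree_C_mul_le _ _).trans (natDegree_mul_le.trans ?_)
      rw [natDegree_X]
      omega

lemma pPoly_mul_X_pow_mem_oddPolynomials (k : ℕ) :
    pPoly k * X ^ (k + 1) ∈ oddPolynomials ℝ := fun i hi => by
  rw [coeff_mul_X_pow']
  split_ifs with hk
  · exact coeff_pPoly_eq_zero (by grind)
  · rfl

lemma eval_zero_pPoly_smul_X_pow_mem_oddPolynomials (k : ℕ) :
    (pPoly k).eval 0 • X ^ (k + 1) ∈ oddPolynomials ℝ := by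
  rcases Nat.even_or_odd k with hk | hk
  · exact Submodule.smul_mem _ _ (X_pow_mem_oddPolynomials hk.add_one)
  · rw [← coeff_zero_eq_eval_zero, coeff_pPoly_eq_zero (by simpa using hk), zero_smul]
    exact Submodule.zero_mem _

noncomputable def splineA (n : ℕ) : ℝ[X] :=
  ∑ k ∈ Finset.range (n + 1), (8 / π * c n k * (pPoly k).eval 0) • X ^ (k + 1)

noncomputable def splineB (n : ℕ) : ℝ[X] :=
  ∑ k ∈ Finset.range (n + 1), (8 / π * (-1) ^ k * c n k) • (pPoly k * X ^ (k + 1))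

lemma splineA_mem (n : ℕ) : splineA n ∈ oddPolynomials ℝ ⊓ degreeLE ℝ (n + 1 : ℕ) := by
  refine Submodule.sum_mem _ fun k hk => ⟨?_, ?_⟩
  · rw [mul_smul]
    exact Submodule.smul_mem _ _ (eval_zero_pPoly_smul_X_pow_mem_oddPolynomials k)
  · refine Submodule.smul_mem _ _ (mem_degreeLE.2 ((degree_X_pow_le _).trans ?_))
    exact_mod_cast Nat.succ_le_succ (Finset.mem_range_succ_iff.1 hk)

lemma splineB_mem (n : ℕ) : splineB n ∈ oddPolynomials ℝ ⊓ degreeLE ℝ (2 * n + 1 : ℕ) := by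
  refine Submodule.sum_mem _ fun k hk => Submodule.smul_mem _ _ ⟨?_, ?_⟩
  · exact pPoly_mul_X_pow_mem_oddPolynomials k
  · refine mem_degreeLE.2 (natDegree_le_iff_degree_le.1 (natDegree_mul_le.trans ?_))
    have hkn := Finset.mem_range.1 hk
    have hdeg := natDegree_pPoly_le k
    rw [natDegree_X_pow]
    omega

lemma four_div_sqrt_pi_mul_exp_mul_f (n : ℕ) (t : ℝ) :
    4 / √π * exp (-t ^ 2) * f n t =
      (splineA n).eval t * exp (-t ^ 2) + (splineB n).eval t * exp (-2 * t ^ 2) := by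
  have hexp : exp (-2 * t ^ 2) = exp (-t ^ 2) * exp (-t ^ 2) := by
    rw [← exp_add]; ring_nf
  simp only [f, splineA, splineB, ← eval_pPoly, eval_finsetSum, eval_smul, eval_mul, eval_pow,
    eval_X, smul_eq_mul, Finset.mul_sum, Finset.sum_mul, ← Finset.sum_add_distrib, hexp]
  refine Finset.sum_congr rfl fun k _ => ?_
  field_simp
  rw [sq_sqrt pi_pos.le]
  ring

lemma hasDerivAt_eval_mul_exp_mul_sq (r : ℝ[X]) {a b : ℝ} (hab : b = -2 * a) (t : ℝ) :
    HasDerivAt (fun t => r.eval t * exp (a * t ^ 2))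
      ((twistedDerivative b r).eval t * exp (a * t ^ 2)) t := by
  have hexp : HasDerivAt (fun t => exp (a * t ^ 2)) (exp (a * t ^ 2) * (a * (2 * t))) t := by
    simpa using ((hasDerivAt_pow 2 t).const_mul a).exp
  refine ((r.hasDerivAt t).mul hexp).congr_deriv ?_
  simp only [twistedDerivative_apply, eval_sub, eval_mul, eval_C, eval_X, hab]
  ring

lemma hasDerivAt_one_sub_exp_neg {F : ℝ → ℝ} {g t : ℝ} (hF : HasDerivAt F g t) :
    HasDerivAt (fun t => 1 - exp (-F t)) (g - g * (1 - exp (-F t))) t :=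
  ((hF.neg.exp).const_sub 1).congr_deriv (by simp only [Pi.neg_apply]; ring)

/-- For each `n` there are a constant `p₀` and polynomials `p₁, p₂`, with
`deg p₁ ≤ n`, `deg p₂ ≤ 2n`, `p₀ = −(p₁(0)+p₂(0))`, such that
`y(t) = 1 − exp[−(p₀ + p₁(t) e^{−t²} + p₂(t) e^{−2t²})]` satisfies `y(0) = 0` and
`y' + gₙ·y = gₙ` where `gₙ(t) = (4/√π) e^{−t²} fₙ(t)`. -/
theorem exists_ode_solution_spline (n : ℕ) :
    ∃ (p₀ : ℝ) (p₁ p₂ : Polynomial ℝ),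
      p₁.degree ≤ (n : ℕ) ∧ p₂.degree ≤ (2 * n : ℕ) ∧
      p₀ = -(p₁.eval 0 + p₂.eval 0) ∧
      (fun t : ℝ =>
          1 - Real.exp (-(p₀ + p₁.eval t * Real.exp (-t ^ 2) +
            p₂.eval t * Real.exp (-2 * t ^ 2)))) 0 = 0 ∧
      ∀ t : ℝ, HasDerivAt
        (fun t : ℝ =>
          1 - Real.exp (-(p₀ + p₁.eval t * Real.exp (-t ^ 2) +
            p₂.eval t * Real.exp (-2 * t ^ 2))))
        ((4 / Real.sqrt π) * Real.exp (-t ^ 2) * f n t -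
          (4 / Real.sqrt π) * Real.exp (-t ^ 2) * f n t *
            (1 - Real.exp (-(p₀ + p₁.eval t * Real.exp (-t ^ 2) +
              p₂.eval t * Real.exp (-2 * t ^ 2))))) t := by
  obtain ⟨p₁, hp₁, hLp₁⟩ :=
    oddPolynomials_inf_degreeLE_le_map_twistedDerivative two_ne_zero n (splineA_mem n)
  obtain ⟨p₂, hp₂, hLp₂⟩ :=
    oddPolynomials_inf_degreeLE_le_map_twistedDerivative four_ne_zero (2 * n) (splineB_mem n)
  refine ⟨_, p₁, p₂, mem_degreeLE.1 hp₁, mem_degreeLE.1 hp₂, rfl, by simp, fun t => ?_⟩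
  refine hasDerivAt_one_sub_exp_neg ?_
  rw [four_div_sqrt_pi_mul_exp_mul_f, ← hLp₁, ← hLp₂]
  have h₁ := hasDerivAt_eval_mul_exp_mul_sq p₁ (a := -1) (b := 2) (by norm_num) t
  have h₂ := hasDerivAt_eval_mul_exp_mul_sq p₂ (a := -2) (b := 4) (by norm_num) t
  simp only [neg_one_mul] at h₁
  exact (h₁.const_add _).add h₂
end

section
/- For every real x, the error function admits the series representation erf(x) = (x/√π)·[1 − x²/30] + (x/√π)·[1 + 11x²/30 + x⁴/15]·e^{−x²} + (x⁷/(60√π))·Σ_{k=0}^∞ (−1)^k (2k+1)(2k+3)·(k+1)!·x^{2k} / [3·(2k+7)·∏_{r=2}^{k+1} (2·Σ_{i=2}^r i)], where the empty product (k = 0) equals 1, and the series converges for all x. -/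
open Real intervalIntegral

/-!
Both sides are `x` times a power series in `x²`. Integrating the exponential series termwise gives
`∫₀ˣ exp (-t²) dt = ∑ (-1)ⁿ x²ⁿ⁺¹ / (n! (2n+1))`. The product in the denominator telescopes, since
`2 ∑_{i=2}^{r+1} i = r (r+3)`, so the `k`-th term of the series is
`(-1)ᵏ / k! · 2 (2k+1)(2k+3) / ((k+2)(k+3)(2k+7)) · x²ᵏ`; in particular its coefficients are
bounded by `1 / k!` and it converges everywhere. The coefficients of `x`, `x³` and `x⁵` on both
sides are then compared directly, and that of `x²ᵏ⁺⁷` is a rational identity in `k`.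
-/

open Finset Nat MeasureTheory

lemma two_mul_sum_Icc_two_succ {R : Type*} [CommSemiring R] (r : ℕ) :
    2 * ∑ i ∈ Icc 2 (r + 1), (i : R) = r * (r + 3) := by
  induction r with
  | zero => simp
  | succ r ih =>
    rw [sum_Icc_succ_top (by omega), mul_add, ih]
    push_cast
    ring

lemma prod_two_mul_sum_Icc_two {K : Type*} [Field K] [CharZero K] (k : ℕ) :
    ∏ r ∈ Icc 2 (k + 1), 2 * ∑ i ∈ Icc 2 r, (i : K) = k ! * (k + 3)! / 6 := by
  induction k with
  | zero => simp [factorial]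
  | succ k ih =>
    rw [prod_Icc_succ_top (by omega), ih, two_mul_sum_Icc_two_succ, factorial_succ k,
      factorial_succ (k + 3)]
    push_cast
    ring

lemma hasSum_exp_neg_sq (x : ℝ) :
    HasSum (fun n : ℕ => (-1) ^ n / n ! * x ^ (2 * n)) (exp (-x ^ 2)) := by
  have hterm : (fun n : ℕ => (-1) ^ n / n ! * x ^ (2 * n)) = fun n => (-x ^ 2) ^ n / n ! := by
    ext n
    rw [neg_pow, pow_mul]
    ring
  rw [hterm, exp_eq_exp_ℝ]
  exact NormedSpace.expSeries_div_hasSum_exp _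

lemma hasSum_integral_exp_neg_sq (x : ℝ) :
    HasSum (fun n : ℕ => (-1) ^ n / n ! * (x ^ (2 * n + 1) / (2 * n + 1)))
      (∫ t in (0 : ℝ)..x, exp (-t ^ 2)) := by
  have hterm (n : ℕ) : ∫ t in (0 : ℝ)..x, (-1) ^ n / n ! * t ^ (2 * n) =
      (-1) ^ n / n ! * (x ^ (2 * n + 1) / (2 * n + 1)) := by
    rw [intervalIntegral.integral_const_mul, integral_pow]
    push_cast
    ring
  simp_rw [← hterm]
  refine intervalIntegral.hasSum_integral_of_dominated_convergence
    (fun n _ => (x ^ 2) ^ n / n !) (fun n => by fun_prop) (fun n => ?_) ?_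
    intervalIntegrable_const (ae_of_all _ fun t _ => hasSum_exp_neg_sq t)
  · refine ae_of_all _ fun t ht => ?_
    have hxt : |t| ≤ |x| := by
      simpa using Set.abs_sub_left_of_mem_uIcc (Set.uIoc_subset_uIcc ht)
    rw [norm_mul, norm_div, norm_pow, norm_neg, norm_one, one_pow, norm_pow, RCLike.norm_natCast,
      Real.norm_eq_abs, pow_mul, ← sq_abs x, one_div_mul_eq_div]
    gcongr
  · exact ae_of_all _ fun _ _ => summable_pow_div_factorial _

noncomputable def erfSplineCoeff (k : ℕ) : ℝ :=
  (-1) ^ k / k ! * (2 * (2 * k + 1) * (2 * k + 3) / ((k + 2) * (k + 3) * (2 * k + 7)))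

lemma erfSeries_term_eq (x : ℝ) (k : ℕ) :
    (-1 : ℝ) ^ k * (2 * (k : ℝ) + 1) * (2 * (k : ℝ) + 3) * ((k + 1)! : ℝ) * x ^ (2 * k) /
        (3 * (2 * (k : ℝ) + 7) * ∏ r ∈ Icc 2 (k + 1), (2 * ∑ i ∈ Icc 2 r, (i : ℝ))) =
      erfSplineCoeff k * x ^ (2 * k) := by
  rw [prod_two_mul_sum_Icc_two, erfSplineCoeff, factorial_succ,
    show k + 3 = k + 2 + 1 from rfl, factorial_succ, factorial_succ, factorial_succ]
  push_cast
  field_simp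
  ring

lemma abs_erfSplineCoeff_le (k : ℕ) : |erfSplineCoeff k| ≤ 1 / k ! := by
  have hk : (0 : ℝ) ≤ k := k.cast_nonneg
  rw [erfSplineCoeff, abs_mul, abs_div, abs_pow, abs_neg, abs_one, one_pow, Nat.abs_cast,
    abs_of_nonneg (by positivity)]
  refine mul_le_of_le_one_right (by positivity) ((div_le_one (by positivity)).mpr ?_)
  nlinarith [mul_nonneg (mul_nonneg hk hk) hk]

lemma summable_erfSplineCoeff_mul_pow (y : ℝ) : Summable fun k => erfSplineCoeff k * y ^ k := by
  refine Summable.of_norm_bounded (summable_pow_div_factorial |y|) fun k => ?_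
  rw [norm_mul, norm_pow, Real.norm_eq_abs, Real.norm_eq_abs, mul_comm, ← mul_one_div]
  exact mul_le_mul_of_nonneg_left (abs_erfSplineCoeff_le k) (by positivity)

/-- The coefficient of `x ^ (2 * k + 7)` in `two_mul_integral_exp_neg_sq`. -/
lemma erfSplineCoeff_spec (x : ℝ) (k : ℕ) :
    2 * ((-1) ^ (k + 3) / (k + 3)! * (x ^ (2 * (k + 3) + 1) / (2 * (k + 3 : ℕ) + 1))) =
      x * ((-1) ^ (k + 3) / (k + 3)! * x ^ (2 * (k + 3))) +
      11 / 30 * x ^ 3 * ((-1) ^ (k + 2) / (k + 2)! * x ^ (2 * (k + 2))) +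
      1 / 15 * x ^ 5 * ((-1) ^ (k + 1) / (k + 1)! * x ^ (2 * (k + 1))) +
      x ^ 7 / 60 * (erfSplineCoeff k * x ^ (2 * k)) := by
  rw [erfSplineCoeff, show k + 3 = k + 2 + 1 from rfl, show k + 2 = k + 1 + 1 from rfl,
    factorial_succ, factorial_succ, factorial_succ]
  push_cast
  field_simp
  ring

lemma two_mul_integral_exp_neg_sq (x : ℝ) :
    2 * ∫ t in (0 : ℝ)..x, exp (-t ^ 2) =
      x * (1 - x ^ 2 / 30) + x * (1 + 11 * x ^ 2 / 30 + x ^ 4 / 15) * exp (-x ^ 2) +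
        x ^ 7 / 60 * ∑' k, erfSplineCoeff k * x ^ (2 * k) := by
  -- compare the series from index 3 on; the first terms are the finite sums left over
  have hI := ((hasSum_nat_add_iff' 3).mpr (hasSum_integral_exp_neg_sq x)).mul_left 2
  have hE (j : ℕ) (c : ℝ) := ((hasSum_nat_add_iff' j).mpr (hasSum_exp_neg_sq x)).mul_left c
  have hS := (summable_erfSplineCoeff_mul_pow (x ^ 2)).hasSum.mul_left (x ^ 7 / 60)
  simp only [← pow_mul] at hS
  have hsum := (((hE 3 x).add (hE 2 (11 / 30 * x ^ 3))).add (hE 1 (1 / 15 * x ^ 5))).add hS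
  simp only [← erfSplineCoeff_spec] at hsum
  linear_combination (norm := (norm_num [sum_range_succ]; ring)) hI.unique hsum

/-- New series for the error function based on the second order spline approximation. -/
theorem erf_series_order_two (x : ℝ) :
    Summable (fun k : ℕ =>
      (-1 : ℝ) ^ k * (2 * (k : ℝ) + 1) * (2 * (k : ℝ) + 3) *
          (Nat.factorial (k + 1) : ℝ) * x ^ (2 * k) /
        (3 * (2 * (k : ℝ) + 7) *
          ∏ r ∈ Finset.Icc 2 (k + 1), (2 * ∑ i ∈ Finset.Icc 2 r, (i : ℝ)))) ∧
    erf x = (x / Real.sqrt π) * (1 - x ^ 2 / 30) +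
      (x / Real.sqrt π) * (1 + 11 * x ^ 2 / 30 + x ^ 4 / 15) * Real.exp (-x ^ 2) +
      (x ^ 7 / (60 * Real.sqrt π)) *
        ∑' k : ℕ,
          (-1 : ℝ) ^ k * (2 * (k : ℝ) + 1) * (2 * (k : ℝ) + 3) *
              (Nat.factorial (k + 1) : ℝ) * x ^ (2 * k) /
            (3 * (2 * (k : ℝ) + 7) *
              ∏ r ∈ Finset.Icc 2 (k + 1), (2 * ∑ i ∈ Finset.Icc 2 r, (i : ℝ))) := by
  simp only [erfSeries_term_eq]
  refine ⟨by simpa only [pow_mul] using summable_erfSplineCoeff_mul_pow (x ^ 2), ?_⟩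
  have hπ : sqrt π ≠ 0 := (sqrt_pos.mpr pi_pos).ne'
  rw [erf, div_mul_eq_mul_div, two_mul_integral_exp_neg_sq]
  field_simp
end

section
/- For all real a > 0, b ≠ 0 and t, the following integral identity holds: ∫₀ᵗ erf(aλ)·λ·e^{bλ} dλ = (1/b)·[t − 1/b]·erf(at)·e^{bt} − (1/b)·exp(b²/(4a²))·{[b/(2a²) − 1/b]·erf(at − b/(2a)) − (1/(a√π))·exp(−(at − b/(2a))²)} + (1/b)·exp(b²/(4a²))·{[b/(2a²) − 1/b]·erf(−b/(2a)) − (1/(a√π))·exp(−b²/(4a²))}. -/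
/-!
Integrate by parts against the primitive `(x/b - 1/b²) e^{bx}` of `x e^{bx}`: what remains is
`(2a/√π) ∫ (x/b - 1/b²) e^{-a²x² + bx}`, and completing the square,
`-a²x² + bx = -(ax - b/(2a))² + b²/(4a²)`, turns it into a Gaussian integral with a linear
weight, whose primitive is a combination of `erf (ax - b/(2a))` and `exp (-(ax - b/(2a))²)`.
-/

open Real intervalIntegral

theorem hasDerivAt_erf (x : ℝ) : HasDerivAt erf (2 / √π * exp (-x ^ 2)) x := by
  have hcont : Continuous fun t : ℝ => exp (-t ^ 2) := by fun_prop
  exact (integral_hasDerivAt_right (hcont.intervalIntegrable _ _)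
    (hcont.stronglyMeasurableAtFilter _ _) hcont.continuousAt).const_mul _

theorem HasDerivAt.erf {f : ℝ → ℝ} {f' x : ℝ} (hf : HasDerivAt f f' x) :
    HasDerivAt (fun y => erf (f y)) (2 / √π * Real.exp (-f x ^ 2) * f') x :=
  (hasDerivAt_erf (f x)).comp x hf

@[fun_prop]
theorem continuous_erf : Continuous erf :=
  continuous_iff_continuousAt.2 fun x => (hasDerivAt_erf x).continuousAt

@[simp]
theorem erf_zero : erf 0 = 0 := by
  simp [erf]

theorem exp_sq_div_mul_exp_neg_sq_sub {a : ℝ} (ha : a ≠ 0) (b x : ℝ) :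
    exp (b ^ 2 / (4 * a ^ 2)) * exp (-(a * x - b / (2 * a)) ^ 2) =
      exp (-(a * x) ^ 2) * exp (b * x) := by
  rw [← exp_add, ← exp_add]
  congr 1
  field_simp
  ring

theorem hasDerivAt_erf_sub_exp_neg_sq {a b : ℝ} (ha : a ≠ 0) (hb : b ≠ 0) (x : ℝ) :
    HasDerivAt
      (fun y => (b / (2 * a ^ 2) - 1 / b) * erf (a * y - b / (2 * a)) -
        1 / (a * √π) * exp (-(a * y - b / (2 * a)) ^ 2))
      (2 * a / √π * (x - 1 / b) * exp (-(a * x - b / (2 * a)) ^ 2)) x := by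
  have hlin : HasDerivAt (fun y => a * y - b / (2 * a)) a x := by
    simpa using ((hasDerivAt_id' x).const_mul a).sub_const (b / (2 * a))
  refine (((HasDerivAt.erf hlin).const_mul (b / (2 * a ^ 2) - 1 / b)).sub
    ((hlin.pow 2).neg.exp.const_mul (1 / (a * √π)))).congr_deriv ?_
  have hπ : √π ≠ 0 := by positivity
  simp only [Pi.neg_apply, Pi.pow_apply, Nat.cast_ofNat, Nat.add_one_sub_one, pow_one]
  field_simp
  ring

theorem hasDerivAt_primitive_erf_mul_id_mul_exp {a b : ℝ} (ha : a ≠ 0) (hb : b ≠ 0) (x : ℝ) :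
    HasDerivAt
      (fun y => 1 / b * (y - 1 / b) * erf (a * y) * exp (b * y) -
        1 / b * exp (b ^ 2 / (4 * a ^ 2)) *
          ((b / (2 * a ^ 2) - 1 / b) * erf (a * y - b / (2 * a)) -
            1 / (a * √π) * exp (-(a * y - b / (2 * a)) ^ 2)))
      (erf (a * x) * x * exp (b * x)) x := by
  have hparts := ((((hasDerivAt_id' x).sub_const (1 / b)).const_mul (1 / b)).mul
    (HasDerivAt.erf ((hasDerivAt_id' x).const_mul a))).mul ((hasDerivAt_id' x).const_mul b).exp
  refine (hparts.sub ((hasDerivAt_erf_sub_exp_neg_sq ha hb x).const_mul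
    (1 / b * exp (b ^ 2 / (4 * a ^ 2))))).congr_deriv ?_
  have hgauss : 1 / b * exp (b ^ 2 / (4 * a ^ 2)) *
      (2 * a / √π * (x - 1 / b) * exp (-(a * x - b / (2 * a)) ^ 2)) =
        2 * a / (b * √π) * (x - 1 / b) * (exp (-(a * x) ^ 2) * exp (b * x)) := by
    rw [← exp_sq_div_mul_exp_neg_sq_sub ha]
    ring
  have hπ : √π ≠ 0 := by positivity
  simp only [Pi.mul_apply, hgauss]
  field_simp
  ring

/-- Integral of `erf(aλ)·λ·e^{bλ}` over `[0, t]`. -/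
theorem integral_erf_mul_id_mul_exp (a b t : ℝ) (ha : 0 < a) (hb : b ≠ 0) :
    ∫ l in (0:ℝ)..t, erf (a * l) * l * Real.exp (b * l) =
      (1 / b) * (t - 1 / b) * erf (a * t) * Real.exp (b * t) -
        (1 / b) * Real.exp (b ^ 2 / (4 * a ^ 2)) *
          ((b / (2 * a ^ 2) - 1 / b) * erf (a * t - b / (2 * a)) -
            (1 / (a * Real.sqrt π)) * Real.exp (-(a * t - b / (2 * a)) ^ 2)) +
        (1 / b) * Real.exp (b ^ 2 / (4 * a ^ 2)) *
          ((b / (2 * a ^ 2) - 1 / b) * erf (-(b / (2 * a))) -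
            (1 / (a * Real.sqrt π)) * Real.exp (-(b ^ 2 / (4 * a ^ 2)))) := by
  have hcont : Continuous fun l => erf (a * l) * l * exp (b * l) := by fun_prop
  rw [integral_eq_sub_of_hasDerivAt (fun x _ => hasDerivAt_primitive_erf_mul_id_mul_exp ha.ne' hb x)
    (hcont.intervalIntegrable 0 t)]
  have hsq : (-(b / (2 * a))) ^ 2 = b ^ 2 / (4 * a ^ 2) := by ring
  simp only [mul_zero, zero_sub, erf_zero, zero_mul, hsq]
  ring
end
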